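/- arXiv:1805.02477 — 2 statements merged into one kernel-verified Lean document; each statement's English description precedes it below -/
import Mathlib

section
/- Let S be a bounded distance set, U an S-Urysohn space, and Σ a countable group with two isometric actions π₁, π₂ of Σ on U, each of which is strongly free, mixing, and has the extension property. Then every (π₁,π₂)-partial isometry φ (i.e. a (π₁,π₂)-equivariant isometry from π₁(Σ)F₁ onto π₂(Σ)F₂ for some finite sets F₁, F₂ ⊆ U) extends to a (π₁,π₂)-equivariant isometry of U onto itself. -/
/-- `S` is a bounded distance set: a countable subset of `[0,1]` containing `0` and `1` and
closed under `(s,t) ↦ min (s+t) 1`. -/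
def BoundedDistSet (S : Set ℝ) : Prop :=
  S.Countable ∧ S ⊆ Set.Icc 0 1 ∧ (0:ℝ) ∈ S ∧ (1:ℝ) ∈ S ∧ ∀ s ∈ S, ∀ t ∈ S, min (s + t) 1 ∈ S

/-- The metric of `U` takes values in `S`. -/
def SValued (S : Set ℝ) (U : Type*) [MetricSpace U] : Prop := ∀ x y : U, dist x y ∈ S

/-- The extension property for a countable `S`-metric space: every Katetov function with values
in `S` on a finite subset is realized by a point. -/
def HasExtProp (S : Set ℝ) (U : Type*) [MetricSpace U] : Prop :=
  ∀ (F : Finset U) (f : U → ℝ),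
    (∀ x ∈ F, f x ∈ S) →
    (∀ x ∈ F, ∀ y ∈ F, |f x - f y| ≤ dist x y ∧ dist x y ≤ f x + f y) →
    ∃ z : U, ∀ x ∈ F, dist z x = f x

section Actions

variable {G : Type*} {U : Type*} [Group G] [MetricSpace U]

/-- An isometric action is strongly free if every nontrivial element moves every point at
distance `1`. -/
def StronglyFree (π : G →* (U ≃ᵢ U)) : Prop :=
  ∀ γ : G, γ ≠ 1 → ∀ x : U, dist (π γ x) x = 1

/-- An isometric action is mixing if for all `x, y` one has `d(γ x, y) = 1` for all but finitely
many `γ`. -/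
def Mixing (π : G →* (U ≃ᵢ U)) : Prop :=
  ∀ x y : U, {γ : G | dist (π γ x) y ≠ 1}.Finite

/-- The saturation `G • F` of a finite set `F` under the action `π`. -/
def orbitSet (π : G →* (U ≃ᵢ U)) (F : Finset U) : Set U :=
  {x : U | ∃ γ : G, ∃ u ∈ F, π γ u = x}

/-- `f` is a finitely supported one-point extension (Katetov function with values in `S`) of the
subset `A`. -/
def FinSuppExt (S : Set ℝ) {U : Type*} [MetricSpace U] (A : Set U) (f : U → ℝ) : Prop :=
  (∀ x ∈ A, f x ∈ S) ∧
  (∀ x ∈ A, ∀ y ∈ A, |f x - f y| ≤ dist x y ∧ dist x y ≤ f x + f y) ∧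
  ∃ F₀ : Finset U, ↑F₀ ⊆ A ∧ ∀ x ∈ A, f x = F₀.fold min 1 (fun y => f y + dist y x)

/-- The action `π` has the extension property: every finitely supported one-point extension of a
finite union of orbits is realized in `U`. -/
def ActionExtProp (S : Set ℝ) (π : G →* (U ≃ᵢ U)) : Prop :=
  ∀ (F : Finset U) (f : U → ℝ), FinSuppExt S (orbitSet π F) f →
    ∃ z : U, ∀ x ∈ orbitSet π F, dist z x = f x

/-- The action `π` is homogeneous: every isometry between two finite subsets of `U` extends to an
element of the image of `π`. -/
def IsHomogeneousHom (π : G →* (U ≃ᵢ U)) : Prop :=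
  ∀ (F : Finset U) (φ : U → U), (∀ x ∈ F, ∀ y ∈ F, dist (φ x) (φ y) = dist x y) →
    ∃ γ : G, ∀ x ∈ F, π γ x = φ x

/-- `Sg` is highly core-free for the action of `Λ` on `U` (via the restriction of `π`). -/
def IsHCFForAction (π : G →* (U ≃ᵢ U)) (Sg Λ : Subgroup G) : Prop :=
  ∀ F : Finset U, ∃ g ∈ Λ,
    (∀ x ∈ F, ∀ u : U, (∃ σ ∈ Sg, ∃ y ∈ F, π σ y = u) → dist (π g x) u = 1) ∧
    (∀ σ ∈ Sg, σ ≠ 1 → ∀ x ∈ F, ∀ y ∈ F, dist (π (σ * g) x) (π g y) = 1)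

end Actions

/-- The topology of pointwise convergence on the isometry group of `U`, where `U` is regarded as
a *discrete* space. -/
def IsoPointwiseTop (U : Type*) [MetricSpace U] : TopologicalSpace (U ≃ᵢ U) :=
  TopologicalSpace.induced (fun (α : U ≃ᵢ U) (x : U) => α x)
    (@Pi.topologicalSpace U (fun _ => U) (fun _ => ⊥))

namespace EPIE
variable {G : Type*} {U : Type*} [Group G] [MetricSpace U] [DecidableEq U]

/-- partial isometry predicate -/
def PI (π₁ π₂ : G →* (U ≃ᵢ U)) (F : Finset U) (φ : U → U) : Prop :=
  (∀ x ∈ orbitSet π₁ F, ∀ y ∈ orbitSet π₁ F, dist (φ x) (φ y) = dist x y) ∧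
  (∀ γ : G, ∀ x ∈ orbitSet π₁ F, φ (π₁ γ x) = π₂ γ (φ x))

lemma pi_mul (π : G →* (U ≃ᵢ U)) (a b : G) (x : U) : π (a * b) x = π a (π b x) := by
  rw [map_mul]; rfl

lemma pi_one (π : G →* (U ≃ᵢ U)) (x : U) : π (1 : G) x = x := by rw [map_one]; rfl

lemma pi_cancel (π : G →* (U ≃ᵢ U)) (γ : G) (x : U) : π γ (π γ⁻¹ x) = x := by
  rw [← pi_mul, mul_inv_cancel, pi_one]

lemma orbit_mono (π : G →* (U ≃ᵢ U)) {F F' : Finset U} (h : F ⊆ F') :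
    orbitSet π F ⊆ orbitSet π F' := by
  rintro x ⟨γ, u, hu, rfl⟩; exact ⟨γ, u, h hu, rfl⟩

lemma mem_orbit_self (π : G →* (U ≃ᵢ U)) {F : Finset U} {u : U} (h : u ∈ F) :
    u ∈ orbitSet π F := ⟨1, u, h, pi_one π u⟩

lemma orbit_smul (π : G →* (U ≃ᵢ U)) {F : Finset U} (γ : G) {x : U}
    (h : x ∈ orbitSet π F) : π γ x ∈ orbitSet π F := by
  obtain ⟨δ, u, hu, rfl⟩ := h
  exact ⟨γ * δ, u, hu, pi_mul π γ δ u⟩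

lemma orbit_insert (π : G →* (U ≃ᵢ U)) (u : U) (F : Finset U) :
    orbitSet π (insert u F) = orbitSet π F ∪ {x | ∃ γ : G, π γ u = x} := by
  ext x
  constructor
  · rintro ⟨γ, w, hw, rfl⟩
    rcases Finset.mem_insert.mp hw with rfl | hw
    · exact Or.inr ⟨γ, rfl⟩
    · exact Or.inl ⟨γ, w, hw, rfl⟩
  · rintro (⟨γ, w, hw, rfl⟩ | ⟨γ, rfl⟩)
    · exact ⟨γ, w, Finset.mem_insert_of_mem hw, rfl⟩
    · exact ⟨γ, u, Finset.mem_insert_self u F, rfl⟩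

lemma orbit_insert_of_mem {π : G →* (U ≃ᵢ U)} {u : U} {F : Finset U}
    (h : u ∈ orbitSet π F) : orbitSet π (insert u F) = orbitSet π F := by
  rw [orbit_insert]
  apply Set.union_eq_self_of_subset_right
  rintro x ⟨γ, rfl⟩; exact orbit_smul π γ h

lemma orbit_image {π₁ π₂ : G →* (U ≃ᵢ U)} {F : Finset U} {φ : U → U}
    (h : PI π₁ π₂ F φ) : orbitSet π₂ (F.image φ) = φ '' orbitSet π₁ F := by
  ext x
  constructor
  · rintro ⟨γ, v, hv, rfl⟩
    obtain ⟨w, hw, rfl⟩ := Finset.mem_image.mp hv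
    exact ⟨π₁ γ w, orbit_smul π₁ γ (mem_orbit_self π₁ hw),
      h.2 γ w (mem_orbit_self π₁ hw)⟩
  · rintro ⟨y, ⟨γ, w, hw, rfl⟩, rfl⟩
    exact ⟨γ, φ w, Finset.mem_image_of_mem φ hw, (h.2 γ w (mem_orbit_self π₁ hw)).symm⟩

lemma pi_inj {π : G →* (U ≃ᵢ U)} (hfree : StronglyFree π) {u : U} {γ δ : G}
    (h : π γ u = π δ u) : γ = δ := by
  by_contra hne
  have hσ : δ⁻¹ * γ ≠ 1 := by
    intro h1; exact hne (by rwa [inv_mul_eq_one, eq_comm] at h1)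
  have := hfree _ hσ u
  rw [pi_mul, h, ← pi_mul, inv_mul_cancel, pi_one, dist_self] at this
  norm_num at this

end EPIE

namespace EPIE
set_option linter.unusedSectionVars false
variable {G : Type*} {U : Type*} [Group G] [MetricSpace U] [DecidableEq U]

lemma forward (S : Set ℝ) (hS : BoundedDistSet S) (hUS : SValued S U)
    (π₁ π₂ : G →* (U ≃ᵢ U))
    (h₁free : StronglyFree π₁) (h₁mix : Mixing π₁)
    (h₂free : StronglyFree π₂) (h₂ext : ActionExtProp S π₂)
    (F : Finset U) (φ : U → U) (h : PI π₁ π₂ F φ) (u : U) :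
    ∃ φ' : U → U, PI π₁ π₂ (insert u F) φ' ∧ ∀ x ∈ orbitSet π₁ F, φ' x = φ x := by
  classical
  by_cases hu : u ∈ orbitSet π₁ F
  · exact ⟨φ, by unfold PI; rw [orbit_insert_of_mem hu]; exact h, fun _ _ => rfl⟩
  -- the support finset
  set F₀ : Finset U := F.biUnion (fun w => (h₁mix w u).toFinset.image (fun γ => π₁ γ w)) with hF₀
  have hF₀sub : (F₀ : Set U) ⊆ orbitSet π₁ F := by
    intro x hx
    obtain ⟨w, hw, hx⟩ := Finset.mem_biUnion.mp hx
    obtain ⟨γ, _, rfl⟩ := Finset.mem_image.mp hx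
    exact ⟨γ, w, hw, rfl⟩
  have hF₀mem : ∀ x ∈ orbitSet π₁ F, dist u x ≠ 1 → x ∈ F₀ := by
    rintro x ⟨γ, w, hw, rfl⟩ hx
    refine Finset.mem_biUnion.mpr ⟨w, hw, Finset.mem_image.mpr ⟨γ, ?_, rfl⟩⟩
    rw [Set.Finite.mem_toFinset]
    rwa [dist_comm] at hx
  have hle1 : ∀ x y : U, dist x y ≤ 1 := fun x y => (hS.2.1 (hUS x y)).2
  -- the central computation
  have claim : ∀ x ∈ orbitSet π₁ F,
      F₀.fold min 1 (fun y => dist u y + dist y x) = dist u x := by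
    intro x hx
    refine le_antisymm ?_ ?_
    · by_cases h1 : dist u x = 1
      · rw [h1]; exact (Finset.fold_min_le 1).mpr (Or.inl le_rfl)
      · refine (Finset.fold_min_le _).mpr (Or.inr ⟨x, hF₀mem x hx h1, ?_⟩)
        simp
    · exact (Finset.le_fold_min _).mpr ⟨hle1 u x, fun y _ => dist_triangle u y x⟩
  have hinjφ : ∀ a ∈ orbitSet π₁ F, ∀ b ∈ orbitSet π₁ F, φ a = φ b → a = b := by
    intro a ha b hb hab
    have := h.1 a ha b hb
    rw [hab, dist_self] at this
    exact dist_le_zero.mp (le_of_eq this.symm) |>.symm ▸ rfl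
  -- the Katetov function
  set f : U → ℝ := fun a => F₀.fold min 1 (fun y => dist u y + dist (φ y) a) with hf
  have hfφ : ∀ x ∈ orbitSet π₁ F, f (φ x) = dist u x := by
    intro x hx
    rw [hf, ← claim x hx]
    exact Finset.fold_congr (fun y hy => by rw [h.1 y (hF₀sub hy) x hx])
  have hA : orbitSet π₂ (F.image φ) = φ '' orbitSet π₁ F := orbit_image h
  have hfse : FinSuppExt S (orbitSet π₂ (F.image φ)) f := by
    refine ⟨?_, ?_, F₀.image φ, ?_, ?_⟩
    · intro a ha
      rw [hA] at ha; obtain ⟨x, hx, rfl⟩ := ha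
      rw [hfφ x hx]; exact hUS u x
    · intro a ha b hb
      rw [hA] at ha hb
      obtain ⟨x, hx, rfl⟩ := ha; obtain ⟨y, hy, rfl⟩ := hb
      rw [hfφ x hx, hfφ y hy, h.1 x hx y hy]
      constructor
      · have := abs_dist_sub_le x y u
        rwa [dist_comm x u, dist_comm y u] at this
      · have := dist_triangle x u y
        rwa [dist_comm x u] at this
    · rw [hA]
      rintro a ha
      obtain ⟨x, hx, rfl⟩ := Finset.mem_image.mp (Finset.mem_coe.mp ha)
      exact ⟨x, hF₀sub hx, rfl⟩
    · intro a ha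
      rw [hA] at ha; obtain ⟨x, hx, rfl⟩ := ha
      rw [hfφ x hx, ← claim x hx]
      rw [Finset.fold_image (fun a ha b hb => hinjφ a (hF₀sub ha) b (hF₀sub hb))]
      exact (Finset.fold_congr (fun y hy => by
        rw [Function.comp_apply, hfφ y (hF₀sub hy), h.1 y (hF₀sub hy) x hx])).symm
  obtain ⟨z, hz⟩ := h₂ext (F.image φ) f hfse
  have hzφ : ∀ x ∈ orbitSet π₁ F, dist z (φ x) = dist u x := by
    intro x hx
    rw [hz (φ x) (by rw [hA]; exact ⟨x, hx, rfl⟩), hfφ x hx]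
  -- define the extension
  set φ' : U → U := fun x => if hx : ∃ γ : G, π₁ γ u = x then π₂ hx.choose z else φ x with hφ'
  have hnot : ∀ x ∈ orbitSet π₁ F, ¬∃ γ : G, π₁ γ u = x := by
    rintro x hx ⟨γ, rfl⟩
    exact hu (by
      have := orbit_smul π₁ γ⁻¹ hx
      rwa [← pi_mul, inv_mul_cancel, pi_one] at this)
  have hagree : ∀ x ∈ orbitSet π₁ F, φ' x = φ x := by
    intro x hx; rw [hφ']; exact dif_neg (hnot x hx)
  have hval : ∀ γ : G, φ' (π₁ γ u) = π₂ γ z := by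
    intro γ
    have hx : ∃ δ : G, π₁ δ u = π₁ γ u := ⟨γ, rfl⟩
    rw [hφ']
    simp only [dif_pos hx]
    rw [pi_inj h₁free hx.choose_spec]
  have hd1 : ∀ γ : G, ∀ y ∈ orbitSet π₁ F, dist (π₂ γ z) (φ y) = dist (π₁ γ u) y := by
    intro γ y hy
    have e1 : dist (π₂ γ z) (φ y) = dist z (π₂ γ⁻¹ (φ y)) := by
      conv_lhs => rw [← pi_cancel π₂ γ (φ y)]
      exact IsometryEquiv.dist_eq (π₂ γ) z _
    have e2 : π₂ γ⁻¹ (φ y) = φ (π₁ γ⁻¹ y) := (h.2 γ⁻¹ y hy).symm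
    have e3 : dist (π₁ γ u) y = dist u (π₁ γ⁻¹ y) := by
      conv_lhs => rw [← pi_cancel π₁ γ y]
      exact IsometryEquiv.dist_eq (π₁ γ) u _
    rw [e1, e2, hzφ _ (orbit_smul π₁ γ⁻¹ hy), e3]
  have hdu : ∀ γ δ : G, dist (π₂ γ z) (π₂ δ z) = dist (π₁ γ u) (π₁ δ u) := by
    intro γ δ
    by_cases hγδ : γ = δ
    · subst hγδ; simp
    · have hσ : γ⁻¹ * δ ≠ 1 := by
        intro h1; exact hγδ (by rwa [inv_mul_eq_one] at h1)
      have e1 : dist (π₂ γ z) (π₂ δ z) = dist z (π₂ (γ⁻¹ * δ) z) := by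
        conv_lhs => rw [show π₂ δ z = π₂ γ (π₂ (γ⁻¹ * δ) z) by
          rw [← pi_mul, mul_inv_cancel_left]]
        exact IsometryEquiv.dist_eq (π₂ γ) z _
      have e2 : dist (π₁ γ u) (π₁ δ u) = dist u (π₁ (γ⁻¹ * δ) u) := by
        conv_lhs => rw [show π₁ δ u = π₁ γ (π₁ (γ⁻¹ * δ) u) by
          rw [← pi_mul, mul_inv_cancel_left]]
        exact IsometryEquiv.dist_eq (π₁ γ) u _
      rw [e1, e2, dist_comm z, dist_comm u, h₂free _ hσ z, h₁free _ hσ u]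
  refine ⟨φ', ⟨?_, ?_⟩, hagree⟩
  · intro x hx y hy
    rw [orbit_insert] at hx hy
    rcases hx with hx | ⟨γ, rfl⟩ <;> rcases hy with hy | ⟨δ, rfl⟩
    · rw [hagree x hx, hagree y hy]; exact h.1 x hx y hy
    · rw [hagree x hx, hval δ, dist_comm, dist_comm x, hd1 δ x hx]
    · rw [hagree y hy, hval γ, hd1 γ y hy]
    · rw [hval γ, hval δ, hdu γ δ]
  · intro γ x hx
    rw [orbit_insert] at hx
    rcases hx with hx | ⟨δ, rfl⟩
    · rw [hagree _ (orbit_smul π₁ γ hx), hagree x hx]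
      exact h.2 γ x hx
    · rw [← pi_mul, hval (γ * δ), hval δ, pi_mul]

end EPIE

namespace EPIE
set_option linter.unusedSectionVars false
variable {G : Type*} {U : Type*} [Group G] [MetricSpace U] [DecidableEq U]

lemma pi_dist_zero {π₁ π₂ : G →* (U ≃ᵢ U)} {F : Finset U} {φ : U → U}
    (h : PI π₁ π₂ F φ) : ∀ a ∈ orbitSet π₁ F, ∀ b ∈ orbitSet π₁ F, φ a = φ b → a = b := by
  intro a ha b hb hab
  have := h.1 a ha b hb
  rw [hab, dist_self] at this
  exact dist_le_zero.mp (le_of_eq this.symm)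

lemma inverse (π₁ π₂ : G →* (U ≃ᵢ U)) (F : Finset U) (φ : U → U) (h : PI π₁ π₂ F φ) :
    ∃ ψ : U → U, PI π₂ π₁ (F.image φ) ψ ∧ ∀ x ∈ orbitSet π₁ F, ψ (φ x) = x := by
  classical
  set ψ : U → U := fun y => if hy : ∃ x, x ∈ orbitSet π₁ F ∧ φ x = y then hy.choose else y
    with hψdef
  have hψφ : ∀ x ∈ orbitSet π₁ F, ψ (φ x) = x := by
    intro x hx
    have hy : ∃ c, c ∈ orbitSet π₁ F ∧ φ c = φ x := ⟨x, hx, rfl⟩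
    rw [hψdef]
    simp only [dif_pos hy]
    exact pi_dist_zero h _ hy.choose_spec.1 x hx hy.choose_spec.2
  have hA : orbitSet π₂ (F.image φ) = φ '' orbitSet π₁ F := orbit_image h
  refine ⟨ψ, ⟨?_, ?_⟩, hψφ⟩
  · intro a ha b hb
    rw [hA] at ha hb
    obtain ⟨x, hx, rfl⟩ := ha; obtain ⟨y, hy, rfl⟩ := hb
    rw [hψφ x hx, hψφ y hy, h.1 x hx y hy]
  · intro γ a ha
    rw [hA] at ha
    obtain ⟨x, hx, rfl⟩ := ha
    rw [hψφ x hx, ← h.2 γ x hx, hψφ _ (orbit_smul π₁ γ hx)]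

lemma step (S : Set ℝ) (hS : BoundedDistSet S) (hUS : SValued S U)
    (π₁ π₂ : G →* (U ≃ᵢ U))
    (h₁free : StronglyFree π₁) (h₁mix : Mixing π₁) (h₁ext : ActionExtProp S π₁)
    (h₂free : StronglyFree π₂) (h₂mix : Mixing π₂) (h₂ext : ActionExtProp S π₂)
    (F : Finset U) (φ : U → U) (h : PI π₁ π₂ F φ) (u : U) :
    ∃ F' : Finset U, ∃ φ' : U → U, PI π₁ π₂ F' φ' ∧ F ⊆ F' ∧
      (∀ x ∈ orbitSet π₁ F, φ' x = φ x) ∧ u ∈ orbitSet π₁ F' ∧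
      ∃ x ∈ orbitSet π₁ F', φ' x = u := by
  classical
  -- forward step
  obtain ⟨φ₁, h1, h1agree⟩ := forward S hS hUS π₁ π₂ h₁free h₁mix h₂free h₂ext F φ h u
  set F₁ := insert u F with hF₁
  -- invert
  obtain ⟨ψ, hψ, hψinv⟩ := inverse π₁ π₂ F₁ φ₁ h1
  set Gf := F₁.image φ₁ with hGf
  -- backward step (swapped roles)
  obtain ⟨ψ', hψ', hψ'agree⟩ :=
    forward S hS hUS π₂ π₁ h₂free h₂mix h₁free h₁ext Gf ψ hψ u
  set G₁ := insert u Gf with hG₁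
  -- invert back
  obtain ⟨φ', hφ', hφ'inv⟩ := inverse π₂ π₁ G₁ ψ' hψ'
  set F' := G₁.image ψ' with hF'
  have hAG : orbitSet π₂ Gf = φ₁ '' orbitSet π₁ F₁ := orbit_image h1
  -- membership w ∈ F₁ gives w ∈ F'
  have hmem : ∀ w ∈ F₁, w ∈ F' := by
    intro w hw
    have hworb : w ∈ orbitSet π₁ F₁ := mem_orbit_self π₁ hw
    have hφ₁w : φ₁ w ∈ Gf := Finset.mem_image_of_mem φ₁ hw
    have : ψ' (φ₁ w) = w := by
      rw [hψ'agree (φ₁ w) (mem_orbit_self π₂ hφ₁w), hψinv w hworb]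
    exact Finset.mem_image.mpr ⟨φ₁ w, Finset.mem_insert_of_mem hφ₁w, this⟩
  have hFsub : F ⊆ F' := fun w hw => hmem w (Finset.mem_insert_of_mem hw)
  -- agreement on orbit of F
  have hagree : ∀ x ∈ orbitSet π₁ F, φ' x = φ x := by
    intro x hx
    have hx1 : x ∈ orbitSet π₁ F₁ := orbit_mono π₁ (Finset.subset_insert u F) hx
    have hy : φ₁ x ∈ orbitSet π₂ Gf := by rw [hAG]; exact ⟨x, hx1, rfl⟩
    have hy1 : φ₁ x ∈ orbitSet π₂ G₁ := orbit_mono π₂ (Finset.subset_insert u Gf) hy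
    have e1 : ψ' (φ₁ x) = x := by rw [hψ'agree (φ₁ x) hy, hψinv x hx1]
    have := hφ'inv (φ₁ x) hy1
    rw [e1] at this
    rw [this, h1agree x hx]
  refine ⟨F', φ', hφ', hFsub, hagree, ?_, ?_⟩
  · exact mem_orbit_self π₁ (hmem u (Finset.mem_insert_self u F))
  · -- surjectivity onto u
    have hu1 : u ∈ orbitSet π₂ G₁ := mem_orbit_self π₂ (Finset.mem_insert_self u Gf)
    refine ⟨ψ' u, ?_, hφ'inv u hu1⟩
    exact mem_orbit_self π₁ (Finset.mem_image_of_mem ψ' (Finset.mem_insert_self u Gf))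

end EPIE

/-- Every `(π₁,π₂)`-equivariant partial isometry between saturations of finite
sets extends to a `(π₁,π₂)`-equivariant isometry of the `S`-Urysohn space `U`. -/
theorem equivariant_partial_isometry_extends
    (S : Set ℝ) (hS : BoundedDistSet S)
    (U : Type*) [MetricSpace U] [Countable U] (hUS : SValued S U) (hUext : HasExtProp S U)
    (G : Type*) [Group G] [Countable G]
    (π₁ π₂ : G →* (U ≃ᵢ U))
    (h₁free : StronglyFree π₁) (h₁mix : Mixing π₁) (h₁ext : ActionExtProp S π₁)
    (h₂free : StronglyFree π₂) (h₂mix : Mixing π₂) (h₂ext : ActionExtProp S π₂)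
    (F₁ F₂ : Finset U) (φ : U → U)
    (hφonto : φ '' orbitSet π₁ F₁ = orbitSet π₂ F₂)
    (hφiso : ∀ x ∈ orbitSet π₁ F₁, ∀ y ∈ orbitSet π₁ F₁, dist (φ x) (φ y) = dist x y)
    (hφequiv : ∀ γ : G, ∀ x ∈ orbitSet π₁ F₁, φ (π₁ γ x) = π₂ γ (φ x)) :
    ∃ ψ : U ≃ᵢ U, (∀ x ∈ orbitSet π₁ F₁, ψ x = φ x) ∧
      ∀ γ : G, ∀ x : U, ψ (π₁ γ x) = π₂ γ (ψ x) := by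
  classical
  obtain ⟨z₀, -⟩ := hUext ∅ (fun _ => 0) (by simp) (by simp)
  haveI : Nonempty U := ⟨z₀⟩
  obtain ⟨e, he⟩ := exists_surjective_nat U
  have h₀ : EPIE.PI π₁ π₂ F₁ φ := ⟨hφiso, hφequiv⟩
  have key : ∀ p : Finset U × (U → U), EPIE.PI π₁ π₂ p.1 p.2 → ∀ u : U,
      ∃ q : Finset U × (U → U), EPIE.PI π₁ π₂ q.1 q.2 ∧ p.1 ⊆ q.1 ∧
        (∀ x ∈ orbitSet π₁ p.1, q.2 x = p.2 x) ∧ u ∈ orbitSet π₁ q.1 ∧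
        ∃ x ∈ orbitSet π₁ q.1, q.2 x = u := by
    rintro ⟨F, f⟩ hPI u
    obtain ⟨F', f', h1, h2, h3, h4, h5⟩ :=
      EPIE.step S hS hUS π₁ π₂ h₁free h₁mix h₁ext h₂free h₂mix h₂ext F f hPI u
    exact ⟨(F', f'), h1, h2, h3, h4, h5⟩
  let T := {p : Finset U × (U → U) // EPIE.PI π₁ π₂ p.1 p.2}
  let nxt : T → U → T := fun p u =>
    ⟨(key p.val p.property u).choose, (key p.val p.property u).choose_spec.1⟩
  let seq : ℕ → T := fun n => Nat.rec ⟨(F₁, φ), h₀⟩ (fun n p => nxt p (e n)) n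
  have hseq : ∀ n : ℕ, (seq n).val.1 ⊆ (seq (n+1)).val.1 ∧
      (∀ x ∈ orbitSet π₁ (seq n).val.1, (seq (n+1)).val.2 x = (seq n).val.2 x) ∧
      e n ∈ orbitSet π₁ (seq (n+1)).val.1 ∧
      ∃ x ∈ orbitSet π₁ (seq (n+1)).val.1, (seq (n+1)).val.2 x = e n := by
    intro n
    exact (key (seq n).val (seq n).property (e n)).choose_spec.2
  have mono : ∀ m n : ℕ, m ≤ n → (seq m).val.1 ⊆ (seq n).val.1 := by
    intro m n hmn
    induction n, hmn using Nat.le_induction with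
    | base => exact Finset.Subset.refl _
    | succ n hmn ih => exact ih.trans (hseq n).1
  have agree : ∀ m n : ℕ, m ≤ n → ∀ x ∈ orbitSet π₁ (seq m).val.1,
      (seq n).val.2 x = (seq m).val.2 x := by
    intro m n hmn
    induction n, hmn using Nat.le_induction with
    | base => intro x _; rfl
    | succ n hmn ih =>
      intro x hx
      rw [(hseq n).2.1 x (EPIE.orbit_mono π₁ (mono m n hmn) hx), ih x hx]
  have cover : ∀ x : U, ∃ n : ℕ, x ∈ orbitSet π₁ (seq n).val.1 := by
    intro x
    obtain ⟨m, rfl⟩ := he x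
    exact ⟨m + 1, (hseq m).2.2.1⟩
  let Ψ : U → U := fun x => (seq (Nat.find (cover x))).val.2 x
  have hΨ : ∀ n : ℕ, ∀ x ∈ orbitSet π₁ (seq n).val.1, Ψ x = (seq n).val.2 x := by
    intro n x hx
    exact (agree (Nat.find (cover x)) n (Nat.find_min' (cover x) hx) x
      (Nat.find_spec (cover x))).symm
  have hdist : ∀ x y : U, dist (Ψ x) (Ψ y) = dist x y := by
    intro x y
    obtain ⟨n, hn⟩ := cover x
    obtain ⟨m, hm⟩ := cover y
    have hn' : x ∈ orbitSet π₁ (seq (max n m)).val.1 :=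
      EPIE.orbit_mono π₁ (mono n _ (le_max_left n m)) hn
    have hm' : y ∈ orbitSet π₁ (seq (max n m)).val.1 :=
      EPIE.orbit_mono π₁ (mono m _ (le_max_right n m)) hm
    rw [hΨ _ x hn', hΨ _ y hm']
    exact (seq (max n m)).property.1 x hn' y hm'
  have hequiv : ∀ γ : G, ∀ x : U, Ψ (π₁ γ x) = π₂ γ (Ψ x) := by
    intro γ x
    obtain ⟨n, hn⟩ := cover x
    rw [hΨ n x hn, hΨ n (π₁ γ x) (EPIE.orbit_smul π₁ γ hn)]
    exact (seq n).property.2 γ x hn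
  have hsurj : Function.Surjective Ψ := by
    intro v
    obtain ⟨m, rfl⟩ := he v
    obtain ⟨x, hx, hxv⟩ := (hseq m).2.2.2
    exact ⟨x, by rw [hΨ (m+1) x hx]; exact hxv⟩
  have hinj : Function.Injective Ψ := by
    intro a b hab
    have := hdist a b
    rw [hab, dist_self] at this
    exact dist_le_zero.mp (le_of_eq this.symm)
  refine ⟨{ toEquiv := Equiv.ofBijective Ψ ⟨hinj, hsurj⟩,
            isometry_toFun := Isometry.of_dist_eq hdist }, ?_, ?_⟩
  · intro x hx
    exact hΨ 0 x hx
  · intro γ x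
    exact hequiv γ x
end

section
/- Let X be a subset of ℕ with X ≠ ∅ and X ≠ ℕ. Then the setwise stabilizer {σ ∈ 𝔖_(∞) : σ(X) = X} is a maximal proper subgroup of 𝔖_(∞). -/
/-- The group `𝔖_(∞)` of finitely supported permutations of `ℕ`. -/
def FinPerm : Subgroup (Equiv.Perm ℕ) where
  carrier := {σ : Equiv.Perm ℕ | {n : ℕ | σ n ≠ n}.Finite}
  one_mem' := by simp
  mul_mem' := by
    intro a b ha hb
    refine (ha.union hb).subset fun n hn => ?_
    by_contra h
    simp only [Set.mem_union, Set.mem_setOf_eq, not_or, not_not] at h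
    exact hn (by simp [Equiv.Perm.mul_apply, h.2, h.1])
  inv_mem' := by
    intro a ha
    refine (ha.image a).subset fun n hn => ?_
    refine ⟨a⁻¹ n, ?_, Equiv.Perm.eq_inv_iff_eq.mp rfl⟩
    simp only [Set.mem_setOf_eq, Equiv.Perm.inv_def, Equiv.apply_symm_apply]
    exact Ne.symm hn

/-- The setwise stabilizer of `X ⊆ ℕ` inside `𝔖_(∞)`. -/
def setStabilizer (X : Set ℕ) : Subgroup ↥FinPerm where
  carrier := {σ : ↥FinPerm | ∀ n : ℕ, n ∈ X ↔ (σ : Equiv.Perm ℕ) n ∈ X}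
  one_mem' := by intro n; simp
  mul_mem' := by
    intro a b ha hb n
    simpa [Equiv.Perm.mul_apply] using (hb n).trans (ha ((b : Equiv.Perm ℕ) n))
  inv_mem' := by
    intro a ha n
    have := ha ((a : Equiv.Perm ℕ)⁻¹ n)
    simpa [Equiv.Perm.inv_def, Equiv.apply_symm_apply] using this.symm

lemma swap_mem_finPerm (a b : ℕ) : Equiv.swap a b ∈ FinPerm := by
  have hs : {n : ℕ | Equiv.swap a b n ≠ n} ⊆ {a, b} := by
    intro n hn
    by_contra h
    simp only [Set.mem_insert_iff, Set.mem_singleton_iff, not_or] at h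
    exact hn (Equiv.swap_apply_of_ne_of_ne h.1 h.2)
  exact ((Set.finite_singleton b).insert a).subset hs

def sw (a b : ℕ) : ↥FinPerm := ⟨Equiv.swap a b, swap_mem_finPerm a b⟩

lemma sw_comm (a b : ℕ) : sw a b = sw b a := Subtype.ext (Equiv.swap_comm a b)

lemma sw_conj (g : ↥FinPerm) (a b : ℕ) :
    g * sw a b * g⁻¹ = sw ((g : Equiv.Perm ℕ) a) ((g : Equiv.Perm ℕ) b) := by
  apply Subtype.ext
  simp only [sw, Subgroup.coe_mul]
  rw [Equiv.swap_apply_apply]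
  rfl

lemma sw_mem_stab {X : Set ℕ} {a b : ℕ} (h : a ∈ X ↔ b ∈ X) : sw a b ∈ setStabilizer X := by
  show ∀ n : ℕ, n ∈ X ↔ Equiv.swap a b n ∈ X
  intro n
  rcases eq_or_ne n a with rfl | hna
  · simpa using h
  rcases eq_or_ne n b with rfl | hnb
  · simpa using h.symm
  · rw [Equiv.swap_apply_of_ne_of_ne hna hnb]

lemma mem_of_swaps (K : Subgroup ↥FinPerm) (hK : ∀ a b : ℕ, sw a b ∈ K) :
    ∀ (n : ℕ) (σ : Equiv.Perm ℕ) (hσ : σ ∈ FinPerm),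
      (hσ : {m : ℕ | σ m ≠ m}.Finite).toFinset.card ≤ n → (⟨σ, hσ⟩ : ↥FinPerm) ∈ K := by
  intro n
  induction n with
  | zero =>
    intro σ hσ hcard
    have : (⟨σ, hσ⟩ : ↥FinPerm) = 1 := by
      apply Subtype.ext
      apply Equiv.ext
      intro m
      by_contra hm
      have : m ∈ (hσ : {m : ℕ | σ m ≠ m}.Finite).toFinset := by
        exact (Set.Finite.mem_toFinset (s := {m : ℕ | σ m ≠ m}) (hs := hσ)).mpr hm
      simp [Finset.card_eq_zero.mp (Nat.le_zero.mp hcard)] at this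
    rw [this]; exact K.one_mem
  | succ n ih =>
    intro σ hσ hcard
    by_cases h1 : σ = 1
    · subst h1
      have : (⟨(1 : Equiv.Perm ℕ), hσ⟩ : ↥FinPerm) = 1 := rfl
      rw [this]; exact K.one_mem
    · obtain ⟨a, ha⟩ : ∃ a, σ a ≠ a := by
        by_contra h; push_neg at h; exact h1 (Equiv.ext h)
      set σ' := Equiv.swap a (σ a) * σ with hσ'def
      have hσ'mem : σ' ∈ FinPerm := FinPerm.mul_mem (swap_mem_finPerm a (σ a)) hσ
      have hsub : {m : ℕ | σ' m ≠ m} ⊆ {m : ℕ | σ m ≠ m} \ {a} := by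
        intro m hm
        simp only [Set.mem_setOf_eq, hσ'def, Equiv.Perm.mul_apply] at hm
        constructor
        · intro hc
          rcases (Equiv.swap_apply_ne_self_iff.mp (by rwa [hc] at hm)).2 with rfl | rfl
          · exact ha hc
          · exact ha (σ.injective hc)
        · intro hc
          rw [Set.mem_singleton_iff] at hc
          subst hc
          exact hm (by simp)
      have hcard' : (hσ'mem : {m : ℕ | σ' m ≠ m}.Finite).toFinset.card ≤ n := by
        have h1 : (hσ'mem : {m : ℕ | σ' m ≠ m}.Finite).toFinset ⊆
            (hσ : {m : ℕ | σ m ≠ m}.Finite).toFinset.erase a := by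
          intro m hm
          replace hm := (Set.Finite.mem_toFinset (s := {m : ℕ | σ' m ≠ m}) (hs := hσ'mem)).mp hm
          have := hsub hm
          exact Finset.mem_erase.mpr ⟨by simpa using this.2,
            (Set.Finite.mem_toFinset (s := {m : ℕ | σ m ≠ m}) (hs := hσ)).mpr this.1⟩
        have h2 := Finset.card_le_card h1
        have h3 : a ∈ (hσ : {m : ℕ | σ m ≠ m}.Finite).toFinset := by
          exact (Set.Finite.mem_toFinset (s := {m : ℕ | σ m ≠ m}) (hs := hσ)).mpr ha
        rw [Finset.card_erase_of_mem h3] at h2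
        omega
      have hmem' := ih σ' hσ'mem hcard'
      have : (⟨σ, hσ⟩ : ↥FinPerm) = sw a (σ a) * ⟨σ', hσ'mem⟩ := by
        apply Subtype.ext
        simp [sw, hσ'def, ← mul_assoc]
      rw [this]
      exact K.mul_mem (hK a (σ a)) hmem'

lemma key (X : Set ℕ) (K : Subgroup ↥FinPerm) (hHK : setStabilizer X ≤ K)
    (τ : ↥FinPerm) (hτ : τ ∈ K) (x : ℕ) (hx : x ∈ X) (hy : (τ : Equiv.Perm ℕ) x ∉ X) :
    ∃ a b : ℕ, a ∈ X ∧ b ∉ X ∧ sw a b ∈ K := by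
  set y := (τ : Equiv.Perm ℕ) x with hydef
  have hfin : {m : ℕ | (τ : Equiv.Perm ℕ) m ≠ m}.Finite := τ.2
  by_cases hXinf : X.Infinite
  · obtain ⟨z, hz⟩ := (hXinf.diff hfin).nonempty
    have hzX : z ∈ X := hz.1
    have hzfix : (τ : Equiv.Perm ℕ) z = z := by simpa using hz.2
    have hswK : sw x z ∈ K := hHK (sw_mem_stab (iff_of_true hx hzX))
    have hconj : τ * sw x z * τ⁻¹ ∈ K := K.mul_mem (K.mul_mem hτ hswK) (K.inv_mem hτ)
    rw [sw_conj, hzfix] at hconj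
    refine ⟨z, y, hzX, hy, ?_⟩
    rw [sw_comm z y]
    exact hconj
  · have hXc : Xᶜ.Infinite := by
      rw [Set.not_infinite] at hXinf
      exact hXinf.infinite_compl
    obtain ⟨z, hz⟩ := ((hXc.diff hfin).diff (Set.finite_singleton y)).nonempty
    have hzX : z ∉ X := hz.1.1
    have hzfix : (τ : Equiv.Perm ℕ) z = z := by simpa using hz.1.2
    have hzy : z ≠ y := by simpa using hz.2
    have hzfix' : ((τ : Equiv.Perm ℕ))⁻¹ z = z := by
      conv_lhs => rw [← hzfix]
      exact (τ : Equiv.Perm ℕ).symm_apply_apply z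
    have hyx : ((τ : Equiv.Perm ℕ))⁻¹ y = x := (τ : Equiv.Perm ℕ).symm_apply_apply x
    have hswK : sw y z ∈ K := hHK (sw_mem_stab (iff_of_false hy hzX))
    have hconj : τ⁻¹ * sw y z * (τ⁻¹)⁻¹ ∈ K :=
      K.mul_mem (K.mul_mem (K.inv_mem hτ) hswK) (K.inv_mem (K.inv_mem hτ))
    rw [sw_conj] at hconj
    have hcoe : ((τ⁻¹ : ↥FinPerm) : Equiv.Perm ℕ) = ((τ : Equiv.Perm ℕ))⁻¹ := rfl
    rw [hcoe, hyx, hzfix'] at hconj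
    exact ⟨x, z, hx, hzX, hconj⟩

/-- For any subset `X` of `ℕ` with `X ≠ ∅` and `X ≠ ℕ`, the setwise stabilizer
of `X` is a maximal proper subgroup of `𝔖_(∞)`. -/
theorem setwise_stabilizer_isCoatom (X : Set ℕ) (hne : X ≠ ∅) (hproper : X ≠ Set.univ) :
    IsCoatom (setStabilizer X) := by
  obtain ⟨a0, ha0⟩ := Set.nonempty_iff_ne_empty.mpr hne
  obtain ⟨b0, hb0⟩ : ∃ b, b ∉ X := by
    by_contra h; push_neg at h
    exact hproper (Set.eq_univ_of_forall h)
  constructor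
  · intro htop
    have hmem : sw a0 b0 ∈ setStabilizer X := htop ▸ Subgroup.mem_top _
    have := (hmem a0).mp ha0
    simp only [sw] at this
    rw [Equiv.swap_apply_left] at this
    exact hb0 this
  · intro K hK
    obtain ⟨τ, hτK, hτH⟩ := SetLike.exists_of_lt hK
    have hHK : setStabilizer X ≤ K := hK.le
    have hmix : ∃ a b : ℕ, a ∈ X ∧ b ∉ X ∧ sw a b ∈ K := by
      have : ¬ ∀ n : ℕ, n ∈ X ↔ (τ : Equiv.Perm ℕ) n ∈ X := hτH
      push_neg at this
      obtain ⟨n, hn⟩ := this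
      rcases hn with ⟨hnX, hτn⟩ | ⟨hnX, hτn⟩
      · exact key X K hHK τ hτK n hnX hτn
      · have hinv : ((τ⁻¹ : ↥FinPerm) : Equiv.Perm ℕ) ((τ : Equiv.Perm ℕ) n) ∉ X := by
          have : ((τ⁻¹ : ↥FinPerm) : Equiv.Perm ℕ) ((τ : Equiv.Perm ℕ) n) = n :=
            (τ : Equiv.Perm ℕ).symm_apply_apply n
          rw [this]; exact hnX
        exact key X K hHK τ⁻¹ (K.inv_mem hτK) ((τ : Equiv.Perm ℕ) n) hτn hinv
    obtain ⟨a, b, haX, hbX, habK⟩ := hmix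
    rw [eq_top_iff]
    rintro ⟨σ, hσ⟩ -
    apply mem_of_swaps K ?_ (hσ : {m : ℕ | σ m ≠ m}.Finite).toFinset.card σ hσ le_rfl
    intro c d
    by_cases hcX : c ∈ X <;> by_cases hdX : d ∈ X
    · exact hHK (sw_mem_stab (iff_of_true hcX hdX))
    · -- c ∈ X, d ∉ X : conjugate sw a b by g = sw a c * sw b d ∈ H
      have hab : a ≠ b := fun h => hbX (h ▸ haX)
      have had : a ≠ d := fun h => hdX (h ▸ haX)
      have hda : d ≠ a := by rintro rfl; exact hdX haX
      have hdc : d ≠ c := fun h => hdX (h ▸ hcX)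
      have hg : sw a c * sw b d ∈ setStabilizer X :=
        (setStabilizer X).mul_mem (sw_mem_stab (iff_of_true haX hcX))
          (sw_mem_stab (iff_of_false hbX hdX))
      have hgK : sw a c * sw b d ∈ K := hHK hg
      have hconj : (sw a c * sw b d) * sw a b * (sw a c * sw b d)⁻¹ ∈ K :=
        K.mul_mem (K.mul_mem hgK habK) (K.inv_mem hgK)
      rw [sw_conj] at hconj
      have hga : ((sw a c * sw b d : ↥FinPerm) : Equiv.Perm ℕ) a = c := by
        simp only [Subgroup.coe_mul, sw, Equiv.Perm.mul_apply]
        rw [Equiv.swap_apply_of_ne_of_ne hab had, Equiv.swap_apply_left]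
      have hgb : ((sw a c * sw b d : ↥FinPerm) : Equiv.Perm ℕ) b = d := by
        simp only [Subgroup.coe_mul, sw, Equiv.Perm.mul_apply]
        rw [Equiv.swap_apply_left, Equiv.swap_apply_of_ne_of_ne hda hdc]
      rwa [hga, hgb] at hconj
    · have hab : a ≠ b := fun h => hbX (h ▸ haX)
      have hac : a ≠ c := fun h => hcX (h ▸ haX)
      have hg : sw a d * sw b c ∈ setStabilizer X :=
        (setStabilizer X).mul_mem (sw_mem_stab (iff_of_true haX hdX))
          (sw_mem_stab (iff_of_false hbX hcX))
      have hgK : sw a d * sw b c ∈ K := hHK hg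
      have hconj : (sw a d * sw b c) * sw a b * (sw a d * sw b c)⁻¹ ∈ K :=
        K.mul_mem (K.mul_mem hgK habK) (K.inv_mem hgK)
      rw [sw_conj] at hconj
      have hga : ((sw a d * sw b c : ↥FinPerm) : Equiv.Perm ℕ) a = d := by
        simp only [Subgroup.coe_mul, sw, Equiv.Perm.mul_apply]
        rw [Equiv.swap_apply_of_ne_of_ne hab hac, Equiv.swap_apply_left]
      have hgb : ((sw a d * sw b c : ↥FinPerm) : Equiv.Perm ℕ) b = c := by
        simp only [Subgroup.coe_mul, sw, Equiv.Perm.mul_apply]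
        have hca : c ≠ a := by rintro rfl; exact hcX haX
        have hcd : c ≠ d := by rintro rfl; exact hcX hdX
        rw [Equiv.swap_apply_left, Equiv.swap_apply_of_ne_of_ne hca hcd]
      rw [hga, hgb] at hconj
      rw [sw_comm c d]
      exact hconj
    · exact hHK (sw_mem_stab (iff_of_false hcX hdX))
end
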